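/- For every n ≥ 1, the maximum cardinality of a family 𝓖 of simple graphs on the vertex set Fin n such that for any two distinct members G, G' ∈ 𝓖 the symmetric difference G ⊕ G' is a connected graph equals 2^(n-1); that is, there exists such a family of cardinality 2^(n-1), and every such family has cardinality at most 2^(n-1). -/

import Mathlib

open SimpleGraph Filter

/-- The symmetric difference of two simple graphs on the same vertex set:
two vertices are adjacent iff they are adjacent in exactly one of the graphs. -/
def symmDiffG {V : Type*} (G G' : SimpleGraph V) : SimpleGraph V where
  Adj u v := (G.Adj u v ∧ ¬ G'.Adj u v) ∨ (G'.Adj u v ∧ ¬ G.Adj u v)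
  symm := by
    constructor
    intro u v h
    rcases h with ⟨h1, h2⟩ | ⟨h1, h2⟩
    · exact Or.inl ⟨h1.symm, fun h => h2 h.symm⟩
    · exact Or.inr ⟨h1.symm, fun h => h2 h.symm⟩
  loopless := by
    constructor
    intro u h
    rcases h with ⟨h1, _⟩ | ⟨h1, _⟩
    · exact G.loopless.irrefl u h1
    · exact G'.loopless.irrefl u h1

/-- The cut graph of a set `S`: edges are pairs with exactly one endpoint in `S`. -/
def cutG {n : ℕ} (S : Finset (Fin n)) : SimpleGraph (Fin n) where
  Adj u v := ¬(u ∈ S ↔ v ∈ S)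
  symm := by constructor; intro u v h; tauto
  loopless := by constructor; intro u h; tauto

lemma symmDiff_cutG {n : ℕ} (S T : Finset (Fin n)) :
    symmDiffG (cutG S) (cutG T) = cutG (symmDiff S T) := by
  ext u v
  simp only [symmDiffG, cutG, Finset.mem_symmDiff]
  tauto

lemma cutG_connected {n : ℕ} (U : Finset (Fin n)) (a b : Fin n)
    (ha : a ∈ U) (hb : b ∉ U) : (cutG U).Connected := by
  rw [SimpleGraph.connected_iff]
  have hab : (cutG U).Adj a b := by simp only [cutG]; tauto
  have key : ∀ w, (cutG U).Reachable w a := by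
    intro w
    by_cases hw : w ∈ U
    · by_cases hwa : w = a
      · subst hwa; exact SimpleGraph.Reachable.refl w
      · have h1 : (cutG U).Adj w b := by simp only [cutG]; tauto
        exact (h1.reachable).trans (hab.symm.reachable)
    · have h1 : (cutG U).Adj w a := by simp only [cutG]; tauto
      exact h1.reachable
  exact ⟨fun u v => (key u).trans (key v).symm, ⟨a⟩⟩

theorem stmt_1 (n : ℕ) (hn : 1 ≤ n) :
    IsGreatest {m : ℕ | ∃ 𝓖 : Finset (SimpleGraph (Fin n)),
        (∀ G ∈ 𝓖, ∀ G' ∈ 𝓖, G ≠ G' → (symmDiffG G G').Connected) ∧ 𝓖.card = m}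
      (2 ^ (n - 1)) := by
  classical
  haveI : NeZero n := ⟨by omega⟩
  constructor
  · -- a family of cardinality 2^(n-1)
    have hinj : Set.InjOn cutG ((Finset.univ.erase (0 : Fin n)).powerset : Set (Finset (Fin n))) := by
      intro S hS T hT hST
      simp only [Finset.mem_coe, Finset.mem_powerset] at hS hT
      have h0S : (0 : Fin n) ∉ S := fun h => (Finset.mem_erase.mp (hS h)).1 rfl
      have h0T : (0 : Fin n) ∉ T := fun h => (Finset.mem_erase.mp (hT h)).1 rfl
      ext v
      by_cases hv : v = 0
      · subst hv; constructor <;> intro h <;> [exact absurd h h0S; exact absurd h h0T]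
      · have := congrArg (fun G => SimpleGraph.Adj G 0 v) hST
        simp only [cutG] at this
        constructor <;> intro h <;> tauto
    refine ⟨(Finset.univ.erase (0 : Fin n)).powerset.image cutG, ?_, ?_⟩
    · intro G hG G' hG' hne
      simp only [Finset.mem_image, Finset.mem_powerset] at hG hG'
      obtain ⟨S, hS, rfl⟩ := hG
      obtain ⟨T, hT, rfl⟩ := hG'
      rw [symmDiff_cutG]
      have h0S : (0 : Fin n) ∉ S := fun h => (Finset.mem_erase.mp (hS h)).1 rfl
      have h0T : (0 : Fin n) ∉ T := fun h => (Finset.mem_erase.mp (hT h)).1 rfl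
      have hST : S ≠ T := fun h => hne (by rw [h])
      obtain ⟨a, ha⟩ : (symmDiff S T).Nonempty := by
        rw [Finset.nonempty_iff_ne_empty]
        intro h
        exact hST (by simpa [symmDiff_eq_bot] using h)
      refine cutG_connected _ a 0 ha ?_
      simp only [Finset.mem_symmDiff]
      tauto
    · rw [Finset.card_image_of_injOn hinj, Finset.card_powerset,
        Finset.card_erase_of_mem (Finset.mem_univ _), Finset.card_univ, Fintype.card_fin]
  · -- upper bound
    rintro m ⟨𝓖, hconn, rfl⟩
    rcases eq_or_lt_of_le hn with h1 | h2
    · -- n = 1 : all graphs on Fin 1 are equal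
      have hsub : ∀ G G' : SimpleGraph (Fin n), G = G' := by
        intro G G'
        ext u v
        have huv : u = v := by
          subst h1
          exact Subsingleton.elim u v
        subst huv
        exact iff_of_false (G.irrefl) (G'.irrefl)
      calc 𝓖.card ≤ 1 := Finset.card_le_one.mpr fun a _ b _ => hsub a b
        _ ≤ 2 ^ (n - 1) := Nat.one_le_two_pow
    · -- n ≥ 2
      have h2' : 1 < n := h2
      set one : Fin n := ⟨1, h2'⟩ with hone
      have h01 : (0 : Fin n) ≠ one := by
        simp [hone, Fin.ext_iff]
      have hmap : ∀ G ∈ 𝓖, (Finset.univ.filter (fun v => G.Adj 0 v)) ∈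
          (Finset.univ.erase (0 : Fin n)).powerset := by
        intro G _
        rw [Finset.mem_powerset]
        intro v hv
        simp only [Finset.mem_filter] at hv
        exact Finset.mem_erase.mpr ⟨(G.ne_of_adj hv.2).symm, Finset.mem_univ v⟩
      have hinj : Set.InjOn (fun G : SimpleGraph (Fin n) =>
          Finset.univ.filter (fun v => G.Adj 0 v)) 𝓖 := by
        intro G hG G' hG' hf
        dsimp only at hf
        by_contra hne
        have hc := hconn G hG G' hG' hne
        have hadj : ∀ v, ¬ (symmDiffG G G').Adj 0 v := by
          intro v hv
          have hv' : G.Adj 0 v ↔ G'.Adj 0 v := by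
            constructor <;> intro h
            · have : v ∈ Finset.univ.filter (fun v => G'.Adj 0 v) := by
                rw [← hf]; simp [h]
              simpa using this
            · have : v ∈ Finset.univ.filter (fun v => G.Adj 0 v) := by
                rw [hf]; simp [h]
              simpa using this
          rcases hv with ⟨h1, h2⟩ | ⟨h1, h2⟩ <;> tauto
        obtain ⟨w⟩ := hc.preconnected 0 one
        have hnil : ¬ w.Nil := SimpleGraph.Walk.not_nil_of_ne h01
        have := w.adj_snd hnil
        exact hadj _ (by simpa using this)
      calc 𝓖.card ≤ ((Finset.univ.erase (0 : Fin n)).powerset).card :=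
            Finset.card_le_card_of_injOn _ hmap hinj
        _ = 2 ^ (n - 1) := by
            rw [Finset.card_powerset, Finset.card_erase_of_mem (Finset.mem_univ _),
              Finset.card_univ, Fintype.card_fin]
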